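/- arXiv:2403.06273 — 3 statements merged into one kernel-verified Lean document; each statement's English description precedes it below -/
import Mathlib

section
/- Let e₁, e₂ be nonzero vectors in a real inner product space with ⟪e₁, e₂⟫ / (‖e₁‖ · ‖e₂‖) ≤ cos α for some α ∈ (0, π/2], and suppose ‖e₂‖ ≤ ‖e₁‖. Then ‖e₁ - e₂‖ ≥ ‖e₁‖ · sin α. -/
open RealInnerProductSpace

theorem dist_ge_sin_angle_mul_larger_error {E : Type*} [NormedAddCommGroup E]
    [InnerProductSpace ℝ E] (e₁ e₂ : E) (he₁ : e₁ ≠ 0) (he₂ : e₂ ≠ 0)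
    (α : ℝ) (hα₀ : 0 < α) (hαπ : α ≤ Real.pi / 2)
    (hcos : ⟪e₁, e₂⟫ / (‖e₁‖ * ‖e₂‖) ≤ Real.cos α)
    (hle : ‖e₂‖ ≤ ‖e₁‖) :
    ‖e₁ - e₂‖ ≥ ‖e₁‖ * Real.sin α := by
  have ha : (0:ℝ) < ‖e₁‖ := norm_pos_iff.mpr he₁
  have hb : (0:ℝ) < ‖e₂‖ := norm_pos_iff.mpr he₂
  have hsin : 0 ≤ Real.sin α :=
    Real.sin_nonneg_of_nonneg_of_le_pi hα₀.le
      (hαπ.trans (by linarith [Real.pi_pos]))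
  have hinner : ⟪e₁, e₂⟫ ≤ ‖e₁‖ * ‖e₂‖ * Real.cos α := by
    have := (div_le_iff₀ (by positivity)).mp hcos
    linarith
  have hnorm : ‖e₁ - e₂‖ ^ 2 = ‖e₁‖ ^ 2 - 2 * ⟪e₁, e₂⟫ + ‖e₂‖ ^ 2 := by
    rw [@norm_sub_sq_real]
  have hsc : Real.sin α ^ 2 + Real.cos α ^ 2 = 1 := by
    have := Real.sin_sq_add_cos_sq α; linarith
  have key : (‖e₁‖ * Real.sin α) ^ 2 ≤ ‖e₁ - e₂‖ ^ 2 := by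
    rw [hnorm]
    nlinarith [sq_nonneg (‖e₂‖ - ‖e₁‖ * Real.cos α), sq_nonneg (‖e₁‖ - ‖e₂‖)]
  have h1 : 0 ≤ ‖e₁‖ * Real.sin α := by positivity
  have := Real.sqrt_le_sqrt key
  rwa [Real.sqrt_sq h1, Real.sqrt_sq (norm_nonneg _)] at this
end

section
/- Let e₁, e₂ be nonzero vectors in a real inner product space such that the angle between them is at least α ∈ (0, π]. Then min(‖e₁‖, ‖e₂‖) · sin(α/2) ≤ ‖e₁ - e₂‖. -/
open RealInnerProductSpace

theorem min_error_sin_half_angle_le_dist {E : Type*} [NormedAddCommGroup E]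
    [InnerProductSpace ℝ E] (e₁ e₂ : E) (he₁ : e₁ ≠ 0) (he₂ : e₂ ≠ 0)
    (α : ℝ) (hα₀ : 0 < α) (hαπ : α ≤ Real.pi)
    (hcos : ⟪e₁, e₂⟫ / (‖e₁‖ * ‖e₂‖) ≤ Real.cos α) :
    min ‖e₁‖ ‖e₂‖ * Real.sin (α / 2) ≤ ‖e₁ - e₂‖ := by
  have ha : (0:ℝ) < ‖e₁‖ := norm_pos_iff.mpr he₁
  have hb : (0:ℝ) < ‖e₂‖ := norm_pos_iff.mpr he₂
  set a := ‖e₁‖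
  set b := ‖e₂‖
  set m := min a b with hm
  have hmpos : 0 < m := lt_min ha hb
  have hma : m ≤ a := min_le_left a b
  have hmb : m ≤ b := min_le_right a b
  have hsin : 0 ≤ Real.sin (α / 2) := by
    apply Real.sin_nonneg_of_nonneg_of_le_pi <;> linarith [Real.pi_pos]
  have hinner : ⟪e₁, e₂⟫ ≤ a * b * Real.cos α := by
    have hab : 0 < a * b := mul_pos ha hb
    calc ⟪e₁, e₂⟫ = ⟪e₁, e₂⟫ / (a * b) * (a * b) := by field_simp
    _ ≤ Real.cos α * (a * b) := by
        exact mul_le_mul_of_nonneg_right hcos hab.le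
    _ = a * b * Real.cos α := by ring
  have hcos1 : Real.cos α = 1 - 2 * Real.sin (α / 2) ^ 2 := by
    have h2 : Real.cos (2 * (α / 2)) = 2 * Real.cos (α/2)^2 - 1 := Real.cos_two_mul _
    have h3 : Real.sin (α/2)^2 + Real.cos (α/2)^2 = 1 := Real.sin_sq_add_cos_sq _
    have hx : (2 : ℝ) * (α / 2) = α := by ring
    rw [hx] at h2
    nlinarith [h2, h3]
  have hsq : (m * Real.sin (α / 2)) ^ 2 ≤ ‖e₁ - e₂‖ ^ 2 := by
    have hns : ‖e₁ - e₂‖ ^ 2 = a ^ 2 - 2 * ⟪e₁, e₂⟫ + b ^ 2 := by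
      rw [@norm_sub_sq_real]
    rw [hns]
    rw [hcos1] at hinner
    nlinarith [sq_nonneg (a - b), sq_nonneg (Real.sin (α/2)), Real.sin_sq_le_one (α/2),
      mul_le_mul hma hmb hmpos.le ha.le]
  nlinarith [hsq, norm_nonneg (e₁ - e₂), mul_nonneg hmpos.le hsin]
end

section
/- Let e₀, e₁, ..., e_N be vectors in a real inner product space and w ∈ ℝ^N with Σ w_i = 1 such that ⟪e₀, Σ w_i e_i⟫ = 0. Let u_⊥ = ũ + Σ w_i e_i for the true solution ũ, and u₀ = ũ + e₀. Then ‖u₀ - ũ‖ ≤ ‖u₀ - u_⊥‖. -/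
open RealInnerProductSpace

theorem orthogonal_superposition_error_bound {E : Type*} [NormedAddCommGroup E]
    [InnerProductSpace ℝ E] {N : ℕ} (e₀ : E) (e : Fin N → E) (w : Fin N → ℝ)
    (hw : ∑ i, w i = 1)
    (horth : ⟪e₀, ∑ i, w i • e i⟫ = 0)
    (utrue uperp u₀ : E)
    (hperp : uperp = utrue + ∑ i, w i • e i)
    (h₀ : u₀ = utrue + e₀) :
    ‖u₀ - utrue‖ ≤ ‖u₀ - uperp‖ := by
  set s := ∑ i, w i • e i with hs
  have h1 : u₀ - utrue = e₀ := by rw [h₀]; abel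
  have h2 : u₀ - uperp = e₀ - s := by rw [h₀, hperp]; abel
  rw [h1, h2]
  have := norm_sub_sq_real e₀ s
  rw [horth] at this
  nlinarith [norm_nonneg e₀, norm_nonneg (e₀ - s), sq_nonneg ‖s‖]
end
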